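/- arXiv:2411.08874 — 8 statements merged into one kernel-verified Lean document; each statement's English description precedes it below -/
import Mathlib

section
/- Suppose for every index i from 1 to m the formula (⋆) holds: for all tuple sequences t = ⟨t₁,…,t_m⟩ with θ(t), there exists j ≤ n_i such that θ_{i,j}(t_i) holds and for all tuples t_i' with θ_{i,j}(t_i') and t_i'[U_{i,j}] = t_i[U_{i,j}], the sequence s = t with its i-th component replaced by t_i' satisfies θ(s) and s[U] = t[U]. Then the set of views V determines Q: for all database instances I, I', if V_{i,j}(I) = V_{i,j}(I') for all i,j, then Q(I) = Q(I'). -/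
/-
Given a witness ⟨t₁,…,t_m⟩ of a tuple of Q(I), replace its components by tuples of I' one relation
at a time. At step i, (⋆) picks a view V_{i,j} selecting tᵢ; the projection tᵢ[U_{i,j}] lies in
V_{i,j}(I) = V_{i,j}(I'), so some tᵢ' ∈ I'(Rᵢ) selected by θ_{i,j} has the same projection, and (⋆)
says the swap preserves both θ and the output tuple. After m steps the witness lies in I', so
Q(I) ⊆ Q(I'), and the converse holds by symmetry.
-/

open scoped Classical

/-- Restriction `t[U]` of a tuple to an attribute set `U`. -/
noncomputable def restrict {A B : Type*} (U : Set A) (t : A → B) : A → Option B :=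
  fun a => if a ∈ U then some (t a) else none

/-- Project-select query `π_U σ_θ S` under set semantics. -/
noncomputable def psView {A B : Type*} (U : Set A) (θ : (A → B) → Prop)
    (S : Set (A → B)) : Set (A → Option B) :=
  {r | ∃ t ∈ S, θ t ∧ r = restrict U t}

/-- The product tuple of a sequence of tuples `⟨t₁,…,t_m⟩`. -/
def prodTup {m : ℕ} {A B : Type*} (ts : Fin m → A → B) : Fin m × A → B :=
  fun p => ts p.1 p.2

/-- The project-select-join query `Q = π_U σ_θ (R₁ × ⋯ × R_m)` with no self joins. -/
noncomputable def joinQuery {m : ℕ} {A B : Type*} (U : Set (Fin m × A))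
    (θ : (Fin m → A → B) → Prop) (I : Fin m → Set (A → B)) :
    Set (Fin m × A → Option B) :=
  {r | ∃ ts : Fin m → A → B, (∀ i, ts i ∈ I i) ∧ θ ts ∧ r = restrict U (prodTup ts)}

/-- Condition (⋆) for index `i`. -/
def StarCond {m : ℕ} {A B : Type*} (U : Set (Fin m × A)) (θ : (Fin m → A → B) → Prop)
    (n : Fin m → ℕ) (Uv : ∀ i, Fin (n i) → Set A)
    (θv : ∀ i, Fin (n i) → (A → B) → Prop) (i : Fin m) : Prop :=
  ∀ ts : Fin m → A → B, θ ts →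
    ∃ j : Fin (n i), θv i j (ts i) ∧
      ∀ t' : A → B, θv i j t' → restrict (Uv i j) t' = restrict (Uv i j) (ts i) →
        θ (Function.update ts i t') ∧
          restrict U (prodTup (Function.update ts i t')) = restrict U (prodTup ts)

/-- `V` determines `Q`. -/
def Determines {m : ℕ} {A B : Type*} (U : Set (Fin m × A)) (θ : (Fin m → A → B) → Prop)
    (n : Fin m → ℕ) (Uv : ∀ i, Fin (n i) → Set A)
    (θv : ∀ i, Fin (n i) → (A → B) → Prop) : Prop :=
  ∀ I I' : Fin m → Set (A → B),
    (∀ i, ∀ j : Fin (n i), psView (Uv i j) (θv i j) (I i) = psView (Uv i j) (θv i j) (I' i)) →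
    joinQuery U θ I = joinQuery U θ I'

section UpdateChain

variable {ι X : Type*} [DecidableEq ι] {P : (ι → X) → Prop} {S S' : ι → Set X}

theorem exists_forall_mem_piecewise_of_update
    (hstep : ∀ x i, P x → x i ∈ S i → ∃ y ∈ S' i, P (Function.update x i y))
    (s : Finset ι) {x : ι → X} (hP : P x) (hS : ∀ i, x i ∈ S i) :
    ∃ y, P y ∧ ∀ i, y i ∈ s.piecewise S' S i := by
  induction s using Finset.induction_on with
  | empty => exact ⟨x, hP, by simpa using hS⟩
  | insert k s hk ih =>
    obtain ⟨y, hPy, hy⟩ := ih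
    have hyk : y k ∈ S k := by simpa [hk] using hy k
    obtain ⟨z, hz, hPz⟩ := hstep y k hPy hyk
    refine ⟨Function.update y k z, hPz, fun i => ?_⟩
    rcases eq_or_ne i k with rfl | hik
    · simpa using hz
    · simpa [Finset.piecewise_insert, hik] using hy i

theorem exists_forall_mem_of_update [Fintype ι]
    (hstep : ∀ x i, P x → x i ∈ S i → ∃ y ∈ S' i, P (Function.update x i y))
    {x : ι → X} (hP : P x) (hS : ∀ i, x i ∈ S i) :
    ∃ y, P y ∧ ∀ i, y i ∈ S' i := by
  simpa using exists_forall_mem_piecewise_of_update hstep Finset.univ hP hS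

end UpdateChain

section Determinacy

variable {m : ℕ} {A B : Type*} {U : Set (Fin m × A)} {θ : (Fin m → A → B) → Prop}
  {n : Fin m → ℕ} {Uv : ∀ i, Fin (n i) → Set A} {θv : ∀ i, Fin (n i) → (A → B) → Prop}

theorem StarCond.exists_update_mem {I I' : Set (A → B)} {i : Fin m}
    (hstar : StarCond U θ n Uv θv i)
    (hV : ∀ j, psView (Uv i j) (θv i j) I = psView (Uv i j) (θv i j) I')
    {ts : Fin m → A → B} (hθ : θ ts) (hts : ts i ∈ I) :
    ∃ t' ∈ I', θ (Function.update ts i t') ∧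
      restrict U (prodTup (Function.update ts i t')) = restrict U (prodTup ts) := by
  obtain ⟨j, hθj, hswap⟩ := hstar ts hθ
  have hview : restrict (Uv i j) (ts i) ∈ psView (Uv i j) (θv i j) I' :=
    hV j ▸ ⟨ts i, hts, hθj, rfl⟩
  obtain ⟨t', ht', hθt', hproj⟩ := hview
  exact ⟨t', ht', hswap t' hθt' hproj.symm⟩

theorem joinQuery_subset_of_starCond (hstar : ∀ i, StarCond U θ n Uv θv i)
    {I I' : Fin m → Set (A → B)}
    (hV : ∀ i j, psView (Uv i j) (θv i j) (I i) = psView (Uv i j) (θv i j) (I' i)) :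
    joinQuery U θ I ⊆ joinQuery U θ I' := by
  rintro r ⟨ts, hts, hθ, rfl⟩
  obtain ⟨ts', ⟨hθ', hr⟩, hts'⟩ := exists_forall_mem_of_update
    (P := fun x => θ x ∧ restrict U (prodTup x) = restrict U (prodTup ts))
    (fun x i ⟨hθx, hx⟩ hxi =>
      let ⟨t', ht', hθ', hr⟩ := (hstar i).exists_update_mem (hV i) hθx hxi
      ⟨t', ht', hθ', hr.trans hx⟩)
    ⟨hθ, rfl⟩ hts
  exact ⟨ts', hts', hθ', hr.symm⟩

end Determinacy

theorem star_implies_determinacy {m : ℕ} {A B : Type*} (U : Set (Fin m × A))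
    (θ : (Fin m → A → B) → Prop) (n : Fin m → ℕ) (Uv : ∀ i, Fin (n i) → Set A)
    (θv : ∀ i, Fin (n i) → (A → B) → Prop)
    (hstar : ∀ i : Fin m, StarCond U θ n Uv θv i) :
    Determines U θ n Uv θv := fun _ _ hV =>
  (joinQuery_subset_of_starCond hstar hV).antisymm
    (joinQuery_subset_of_starCond hstar fun i j => (hV i j).symm)
end

section
/- Suppose for some index k the formula (⋆) fails: there exists a tuple sequence t with θ(t) such that for every j ≤ n_k, either θ_{k,j}(t_k) fails, or there is a tuple t'_{k,j} with θ_{k,j}(t'_{k,j}) and t'_{k,j}[U_{k,j}] = t_k[U_{k,j}], but replacing the k-th component of t by t'_{k,j} yields a sequence s with ¬(θ(s) ∧ s[U] = t[U]). Then there exist finite database instances I and I' such that V_{i,j}(I) = V_{i,j}(I') for all views but Q(I) ≠ Q(I'). -/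
open scoped Classical

theorem star_failure_finite_counterexample {m : ℕ} {A B : Type*} (U : Set (Fin m × A))
    (θ : (Fin m → A → B) → Prop) (n : Fin m → ℕ) (Uv : ∀ i, Fin (n i) → Set A)
    (θv : ∀ i, Fin (n i) → (A → B) → Prop) (k : Fin m)
    (hfail : ∃ ts : Fin m → A → B, θ ts ∧
      ∀ j : Fin (n k), ¬ θv k j (ts k) ∨
        ∃ t' : A → B, θv k j t' ∧ restrict (Uv k j) t' = restrict (Uv k j) (ts k) ∧
          ¬ (θ (Function.update ts k t') ∧
              restrict U (prodTup (Function.update ts k t')) = restrict U (prodTup ts))) :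
    ∃ I I' : Fin m → Set (A → B),
      (∀ i, (I i).Finite) ∧ (∀ i, (I' i).Finite) ∧
      (∀ i, ∀ j : Fin (n i),
        psView (Uv i j) (θv i j) (I i) = psView (Uv i j) (θv i j) (I' i)) ∧
      joinQuery U θ I ≠ joinQuery U θ I' := by
  obtain ⟨ts, hθ, hj⟩ := hfail
  -- predicate picking the "bad witness" case
  set P : Fin (n k) → Prop := fun j => ∃ t' : A → B,
      θv k j t' ∧ restrict (Uv k j) t' = restrict (Uv k j) (ts k) ∧
        ¬ (θ (Function.update ts k t') ∧
            restrict U (prodTup (Function.update ts k t')) = restrict U (prodTup ts)) with hP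
  have hPw : ∀ j, θv k j (ts k) → P j := by
    intro j hjk
    rcases hj j with h | h
    · exact absurd hjk h
    · exact h
  classical
  let w : Fin (n k) → (A → B) := fun j => if h : P j then h.choose else ts k
  have hw : ∀ j, P j → θv k j (w j) ∧
      restrict (Uv k j) (w j) = restrict (Uv k j) (ts k) ∧
        ¬ (θ (Function.update ts k (w j)) ∧
            restrict U (prodTup (Function.update ts k (w j))) = restrict U (prodTup ts)) := by
    intro j h
    simp only [w, dif_pos h]
    exact h.choose_spec
  set T : Set (A → B) := {t | ∃ j, P j ∧ t = w j} with hT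
  have hTfin : T.Finite := by
    have : T = w '' {j | P j} := by
      ext t; constructor
      · rintro ⟨j, hj, rfl⟩; exact ⟨j, hj, rfl⟩
      · rintro ⟨j, hj, rfl⟩; exact ⟨j, hj, rfl⟩
    rw [this]
    exact (Set.toFinite _).image w
  refine ⟨Function.update (fun i => {ts i}) k (insert (ts k) T),
          Function.update (fun i => {ts i}) k T, ?_, ?_, ?_, ?_⟩
  · intro i
    rcases eq_or_ne i k with rfl | h
    · rw [Function.update_self]; exact hTfin.insert _
    · rw [Function.update_of_ne h]; exact Set.finite_singleton _
  · intro i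
    rcases eq_or_ne i k with rfl | h
    · rw [Function.update_self]; exact hTfin
    · rw [Function.update_of_ne h]; exact Set.finite_singleton _
  · -- views agree
    intro i j
    rcases eq_or_ne i k with rfl | h
    · rw [Function.update_self, Function.update_self]
      ext r
      constructor
      · rintro ⟨t, ht, hθt, rfl⟩
        rcases ht with rfl | ht
        · -- t = ts k, use w j instead
          have hPj := hPw j hθt
          obtain ⟨h1, h2, _⟩ := hw j hPj
          exact ⟨w j, ⟨j, hPj, rfl⟩, h1, h2.symm⟩
        · exact ⟨t, ht, hθt, rfl⟩
      · rintro ⟨t, ht, hθt, rfl⟩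
        exact ⟨t, Set.mem_insert_of_mem _ ht, hθt, rfl⟩
    · rw [Function.update_of_ne h, Function.update_of_ne h]
  · -- queries differ
    intro hQ
    have hmemI : restrict U (prodTup ts) ∈ joinQuery U θ
        (Function.update (fun i => {ts i}) k (insert (ts k) T)) := by
      refine ⟨ts, ?_, hθ, rfl⟩
      intro i
      rcases eq_or_ne i k with rfl | h
      · rw [Function.update_self]; exact Set.mem_insert _ _
      · rw [Function.update_of_ne h]; rfl
    rw [hQ] at hmemI
    obtain ⟨ts', hmem, hθ', heq⟩ := hmemI
    have hkk := hmem k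
    rw [Function.update_self] at hkk
    obtain ⟨j, hPj, hwj⟩ := hkk
    have hts' : ts' = Function.update ts k (w j) := by
      funext i
      rcases eq_or_ne i k with rfl | h
      · rw [Function.update_self]; exact hwj
      · have := hmem i
        rw [Function.update_of_ne h] at this
        rw [Function.update_of_ne h]
        exact this
    obtain ⟨_, _, h3⟩ := hw j hPj
    apply h3
    rw [← hts']
    exact ⟨hθ', heq.symm⟩
end

section
/- The set of project-select views V determines the self-join-free project-select-join query Q (over all instances, finite or infinite) if and only if for every 1 ≤ i ≤ m the formula (⋆) holds: for all tuple sequences t with θ(t), there exists j ≤ n_i with θ_{i,j}(t_i) such that for every tuple t_i' satisfying θ_{i,j}(t_i') and t_i'[U_{i,j}] = t_i[U_{i,j}], the sequence obtained from t by replacing its i-th component with t_i' satisfies θ and agrees with t on U. -/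
open scoped Classical

theorem determinacy_iff_star {m : ℕ} {A B : Type*} (U : Set (Fin m × A))
    (θ : (Fin m → A → B) → Prop) (n : Fin m → ℕ) (Uv : ∀ i, Fin (n i) → Set A)
    (θv : ∀ i, Fin (n i) → (A → B) → Prop) :
    Determines U θ n Uv θv ↔ ∀ i : Fin m, StarCond U θ n Uv θv i := by
  constructor
  · -- Determines → Star
    intro hdet i ts hθ
    by_contra hstar
    have hchoice : ∀ j : Fin (n i), θv i j (ts i) →
        ∃ t', θv i j t' ∧ restrict (Uv i j) t' = restrict (Uv i j) (ts i) ∧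
          ¬(θ (Function.update ts i t') ∧
            restrict U (prodTup (Function.update ts i t')) = restrict U (prodTup ts)) := by
      intro j hj
      by_contra hc
      push_neg at hc
      exact hstar ⟨j, hj, fun t' h1 h2 => hc t' h1 h2⟩
    -- The counterexample instances
    set S : Set (A → B) :=
      {t | ∃ j : Fin (n i), ∃ h : θv i j (ts i), t = (hchoice j h).choose} with hS
    set I : Fin m → Set (A → B) := fun k => if k = i then S else {ts k} with hI
    set I' : Fin m → Set (A → B) := fun k => if k = i then insert (ts i) S else {ts k} with hI'
    have hviews : ∀ k, ∀ j : Fin (n k),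
        psView (Uv k j) (θv k j) (I k) = psView (Uv k j) (θv k j) (I' k) := by
      intro k j
      by_cases hk : k = i
      · subst hk
        simp only [hI, hI', if_pos rfl]
        apply Set.Subset.antisymm
        · rintro r ⟨t, ht, hθt, rfl⟩
          exact ⟨t, Set.mem_insert_of_mem _ ht, hθt, rfl⟩
        · rintro r ⟨t, ht, hθt, rfl⟩
          rcases ht with ht | ht
          · subst ht
            refine ⟨(hchoice j hθt).choose, ⟨j, hθt, rfl⟩,
              (hchoice j hθt).choose_spec.1, ?_⟩
            exact ((hchoice j hθt).choose_spec.2.1).symm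
          · exact ⟨t, ht, hθt, rfl⟩
      · simp only [hI, hI', if_neg hk]
    have heq := hdet I I' hviews
    have hmem : restrict U (prodTup ts) ∈ joinQuery U θ I' := by
      refine ⟨ts, ?_, hθ, rfl⟩
      intro k
      by_cases hk : k = i
      · subst hk; simp only [hI', if_pos rfl]; exact Set.mem_insert _ _
      · simp only [hI', if_neg hk]; rfl
    rw [← heq] at hmem
    obtain ⟨us, hus, hθu, hru⟩ := hmem
    have husi := hus i
    simp only [hI, if_pos rfl] at husi
    obtain ⟨j, hj, hwit⟩ := husi
    have hother : ∀ k, k ≠ i → us k = ts k := by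
      intro k hk
      have := hus k
      simp only [hI, if_neg hk] at this
      exact this
    have hupd : us = Function.update ts i (us i) := by
      funext k
      by_cases hk : k = i
      · subst hk; simp
      · rw [Function.update_of_ne hk, hother k hk]
    obtain ⟨ht'θ, ht'r, hbad⟩ := (hchoice j hj).choose_spec
    apply hbad
    rw [← hwit, ← hupd]
    exact ⟨hθu, hru.symm⟩
  · -- Star → Determines
    intro hstar
    have key : ∀ I I' : Fin m → Set (A → B),
        (∀ i, ∀ j : Fin (n i),
          psView (Uv i j) (θv i j) (I i) = psView (Uv i j) (θv i j) (I' i)) →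
        joinQuery U θ I ⊆ joinQuery U θ I' := by
      intro I I' hV r hr
      obtain ⟨ts, hmem, hθ, rfl⟩ := hr
      have step : ∀ k : ℕ, k ≤ m → ∃ ts' : Fin m → A → B,
          (∀ l : Fin m, (l : ℕ) < k → ts' l ∈ I' l) ∧
          (∀ l : Fin m, k ≤ (l : ℕ) → ts' l ∈ I l) ∧ θ ts' ∧
          restrict U (prodTup ts') = restrict U (prodTup ts) := by
        intro k
        induction k with
        | zero => exact fun _ => ⟨ts, fun l hl => absurd hl (by omega), fun l _ => hmem l, hθ, rfl⟩
        | succ k ih =>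
          intro hk
          obtain ⟨ts', h1, h2, hθ', hr'⟩ := ih (by omega)
          set i : Fin m := ⟨k, by omega⟩ with hi
          obtain ⟨j, hj, hrepl⟩ := hstar i ts' hθ'
          have hview : restrict (Uv i j) (ts' i) ∈ psView (Uv i j) (θv i j) (I i) :=
            ⟨ts' i, h2 i (le_refl _), hj, rfl⟩
          rw [hV i j] at hview
          obtain ⟨t', ht'mem, ht'θ, ht'eq⟩ := hview
          obtain ⟨hθ'', hr''⟩ := hrepl t' ht'θ ht'eq.symm
          refine ⟨Function.update ts' i t', ?_, ?_, hθ'', hr''.trans hr'⟩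
          · intro l hl
            by_cases hli : l = i
            · subst hli; simpa using ht'mem
            · rw [Function.update_of_ne hli]
              apply h1
              have : (l : ℕ) ≠ k := fun h => hli (Fin.ext h)
              omega
          · intro l hl
            have hlk : (l : ℕ) ≠ k := by omega
            have hli : l ≠ i := fun h => hlk (by rw [h])
            rw [Function.update_of_ne hli]
            exact h2 l (by omega)
      obtain ⟨ts', h1, _, hθ', hr'⟩ := step m le_rfl
      exact ⟨ts', fun l => h1 l l.isLt, hθ', hr'.symm⟩
    intro I I' hV
    exact Set.Subset.antisymm (key I I' hV)
      (key I' I fun i j => (hV i j).symm)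
end

section
/- For project-select views and a project-select-join query with no self joins, finite determinacy and unrestricted determinacy coincide: V determines Q over all (possibly infinite) instances if and only if V determines Q over all finite instances. -/
open scoped Classical

/-- Finite determinacy: the determinacy condition restricted to finite instances. -/
def FinDetermines {m : ℕ} {A B : Type*} (U : Set (Fin m × A)) (θ : (Fin m → A → B) → Prop)
    (n : Fin m → ℕ) (Uv : ∀ i, Fin (n i) → Set A)
    (θv : ∀ i, Fin (n i) → (A → B) → Prop) : Prop :=
  ∀ I I' : Fin m → Set (A → B), (∀ i, (I i).Finite) → (∀ i, (I' i).Finite) →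
    (∀ i, ∀ j : Fin (n i), psView (Uv i j) (θv i j) (I i) = psView (Uv i j) (θv i j) (I' i)) →
    joinQuery U θ I = joinQuery U θ I'

/-- Finite determinacy implies the star condition at every index. -/
lemma findet_star {m : ℕ} {A B : Type*} (U : Set (Fin m × A)) (θ : (Fin m → A → B) → Prop)
    (n : Fin m → ℕ) (Uv : ∀ i, Fin (n i) → Set A)
    (θv : ∀ i, Fin (n i) → (A → B) → Prop)
    (hfd : FinDetermines U θ n Uv θv) (i : Fin m) : StarCond U θ n Uv θv i := by
  intro ts hθ
  by_contra hno
  have key : ∀ j : Fin (n i), θv i j (ts i) → ∃ t', θv i j t' ∧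
      restrict (Uv i j) t' = restrict (Uv i j) (ts i) ∧
      ¬ (θ (Function.update ts i t') ∧
        restrict U (prodTup (Function.update ts i t')) = restrict U (prodTup ts)) := by
    intro j hj
    by_contra hc
    push_neg at hc
    exact hno ⟨j, hj, fun t' h1 h2 => hc t' h1 h2⟩
  -- choose witnesses
  let w : Fin (n i) → (A → B) := fun j =>
    if h : θv i j (ts i) then (key j h).choose else ts i
  have wspec : ∀ j (h : θv i j (ts i)), θv i j (w j) ∧
      restrict (Uv i j) (w j) = restrict (Uv i j) (ts i) ∧
      ¬ (θ (Function.update ts i (w j)) ∧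
        restrict U (prodTup (Function.update ts i (w j))) = restrict U (prodTup ts)) := by
    intro j h
    have : w j = (key j h).choose := dif_pos h
    rw [this]
    exact (key j h).choose_spec
  set T' : Set (A → B) := {t | ∃ j, θv i j (ts i) ∧ t = w j} with hT'
  have hT'fin : T'.Finite := by
    apply (Set.finite_range w).subset
    rintro t ⟨j, -, rfl⟩
    exact ⟨j, rfl⟩
  set I₁ : Fin m → Set (A → B) := fun k => if k = i then insert (ts i) T' else {ts k} with hI₁
  set I₂ : Fin m → Set (A → B) := fun k => if k = i then T' else {ts k} with hI₂
  have hfin₁ : ∀ k, (I₁ k).Finite := by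
    intro k; simp only [hI₁]; split
    · exact hT'fin.insert _
    · exact Set.finite_singleton _
  have hfin₂ : ∀ k, (I₂ k).Finite := by
    intro k; simp only [hI₂]; split
    · exact hT'fin
    · exact Set.finite_singleton _
  have hviews : ∀ k, ∀ j' : Fin (n k),
      psView (Uv k j') (θv k j') (I₁ k) = psView (Uv k j') (θv k j') (I₂ k) := by
    intro k j'
    by_cases hk : k = i
    · subst hk
      simp only [hI₁, hI₂, if_pos rfl]
      apply Set.Subset.antisymm
      · rintro r ⟨t, ht, hθt, rfl⟩
        rcases Set.mem_insert_iff.mp ht with h | h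
        · subst h
          obtain ⟨p1, p2, -⟩ := wspec j' hθt
          exact ⟨w j', ⟨j', hθt, rfl⟩, p1, p2.symm⟩
        · exact ⟨t, h, hθt, rfl⟩
      · rintro r ⟨t, ht, hθt, rfl⟩
        exact ⟨t, Set.mem_insert_of_mem _ ht, hθt, rfl⟩
    · simp only [hI₁, hI₂, if_neg hk]
  have hq := hfd I₁ I₂ hfin₁ hfin₂ hviews
  have hr : restrict U (prodTup ts) ∈ joinQuery U θ I₁ := by
    refine ⟨ts, ?_, hθ, rfl⟩
    intro k
    by_cases hk : k = i
    · subst hk; simp only [hI₁, if_pos rfl]; exact Set.mem_insert _ _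
    · simp only [hI₁, if_neg hk]; exact rfl
  rw [hq] at hr
  obtain ⟨ts₂, hmem, hθ₂, heq⟩ := hr
  have hi : ts₂ i ∈ T' := by
    have := hmem i
    simpa only [hI₂, if_pos rfl] using this
  obtain ⟨j, hj, hwj⟩ := hi
  have hts₂ : ts₂ = Function.update ts i (w j) := by
    funext k
    by_cases hk : k = i
    · subst hk; rw [Function.update_self]; exact hwj
    · rw [Function.update_of_ne hk]
      have := hmem k
      simpa only [hI₂, if_neg hk, Set.mem_singleton_iff] using this
  obtain ⟨-, -, hbad⟩ := wspec j hj
  rw [hts₂] at hθ₂ heq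
  exact hbad ⟨hθ₂, heq.symm⟩

/-- The star condition (at every index) implies one inclusion of determinacy. -/
lemma star_subset {m : ℕ} {A B : Type*} (U : Set (Fin m × A)) (θ : (Fin m → A → B) → Prop)
    (n : Fin m → ℕ) (Uv : ∀ i, Fin (n i) → Set A)
    (θv : ∀ i, Fin (n i) → (A → B) → Prop)
    (hstar : ∀ i, StarCond U θ n Uv θv i)
    (I I' : Fin m → Set (A → B))
    (hv : ∀ i, ∀ j : Fin (n i),
      psView (Uv i j) (θv i j) (I i) = psView (Uv i j) (θv i j) (I' i)) :
    joinQuery U θ I ⊆ joinQuery U θ I' := by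
  rintro r ⟨ts, hmem, hθ, rfl⟩
  suffices h : ∀ k : ℕ, k ≤ m → ∃ ts' : Fin m → A → B, θ ts' ∧
      restrict U (prodTup ts') = restrict U (prodTup ts) ∧
      (∀ l : Fin m, (l : ℕ) < k → ts' l ∈ I' l) ∧
      (∀ l : Fin m, k ≤ (l : ℕ) → ts' l ∈ I l) by
    obtain ⟨ts', h1, h2, h3, -⟩ := h m le_rfl
    exact ⟨ts', fun l => h3 l l.isLt, h1, h2.symm⟩
  intro k
  induction k with
  | zero =>
    exact fun _ => ⟨ts, hθ, rfl, fun l hl => absurd hl (Nat.not_lt_zero _), fun l _ => hmem l⟩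
  | succ k ih =>
    intro hk
    obtain ⟨ts', h1, h2, h3, h4⟩ := ih (Nat.le_of_succ_le hk)
    set i : Fin m := ⟨k, hk⟩ with hi
    obtain ⟨j, hj, hrep⟩ := hstar i ts' h1
    have hIi : ts' i ∈ I i := h4 i le_rfl
    have hview : restrict (Uv i j) (ts' i) ∈ psView (Uv i j) (θv i j) (I' i) := by
      rw [← hv i j]; exact ⟨ts' i, hIi, hj, rfl⟩
    obtain ⟨t', ht'I, ht'θ, ht'eq⟩ := hview
    obtain ⟨hθnew, heqnew⟩ := hrep t' ht'θ ht'eq.symm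
    refine ⟨Function.update ts' i t', hθnew, heqnew.trans h2, ?_, ?_⟩
    · intro l hl
      by_cases hli : l = i
      · subst hli; rw [Function.update_self]; exact ht'I
      · rw [Function.update_of_ne hli]
        refine h3 l (lt_of_le_of_ne (Nat.lt_succ_iff.mp hl) ?_)
        intro hlk
        exact hli (Fin.ext hlk)
    · intro l hl
      have hli : l ≠ i := by
        intro h; subst h
        exact absurd hl (by simp [hi, Nat.lt_succ_iff])
      rw [Function.update_of_ne hli]
      exact h4 l (Nat.le_of_succ_le hl)

theorem finite_eq_unrestricted_determinacy {m : ℕ} {A B : Type*} (U : Set (Fin m × A))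
    (θ : (Fin m → A → B) → Prop) (n : Fin m → ℕ) (Uv : ∀ i, Fin (n i) → Set A)
    (θv : ∀ i, Fin (n i) → (A → B) → Prop) :
    Determines U θ n Uv θv ↔ FinDetermines U θ n Uv θv := by
  constructor
  · intro hd I I' _ _ hv
    exact hd I I' hv
  · intro hfd I I' hv
    have hstar : ∀ i, StarCond U θ n Uv θv i := fun i => findet_star U θ n Uv θv hfd i
    exact Set.Subset.antisymm
      (star_subset U θ n Uv θv hstar I I' hv)
      (star_subset U θ n Uv θv hstar I' I (fun i j => (hv i j).symm))
end

section
/- In the counterexample construction: define I(R_k) = { t'_{k,j} : θ_{k,j}(t_k) holds, 1 ≤ j ≤ n_k } and I(R_i) = {t_i} for i ≠ k, and I'(R_k) = I(R_k) ∪ {t_k}, I'(R_i) = I(R_i) for i ≠ k, where each t'_{k,j} satisfies θ_{k,j}(t'_{k,j}) and t'_{k,j}[U_{k,j}] = t_k[U_{k,j}]. Then for every view V_{k,j} = π_{U_{k,j}} σ_{θ_{k,j}} R_k, we have V_{k,j}(I) = V_{k,j}(I'). -/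
open scoped Classical

section psView

variable {A B : Type*} {U : Set A} {θ : (A → B) → Prop}

theorem psView_union (S T : Set (A → B)) :
    psView U θ (S ∪ T) = psView U θ S ∪ psView U θ T := by
  ext r
  constructor
  · rintro ⟨t, hS | hT, hθ, rfl⟩
    exacts [Or.inl ⟨t, hS, hθ, rfl⟩, Or.inr ⟨t, hT, hθ, rfl⟩]
  · rintro (⟨t, hS, hθ, rfl⟩ | ⟨t, hT, hθ, rfl⟩)
    exacts [⟨t, Or.inl hS, hθ, rfl⟩, ⟨t, Or.inr hT, hθ, rfl⟩]

theorem psView_singleton_subset {S : Set (A → B)} {t : A → B}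
    (h : θ t → ∃ s ∈ S, θ s ∧ restrict U s = restrict U t) :
    psView U θ {t} ⊆ psView U θ S := by
  rintro r ⟨_, rfl, hθ, rfl⟩
  obtain ⟨s, hs, hθs, hst⟩ := h hθ
  exact ⟨s, hs, hθs, hst.symm⟩

theorem psView_union_singleton {S : Set (A → B)} {t : A → B}
    (h : θ t → ∃ s ∈ S, θ s ∧ restrict U s = restrict U t) :
    psView U θ (S ∪ {t}) = psView U θ S := by
  rw [psView_union, Set.union_eq_left.mpr (psView_singleton_subset h)]

end psView

theorem counterexample_views_agree {A B : Type*} (n : ℕ)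
    (Uv : Fin n → Set A) (θv : Fin n → (A → B) → Prop)
    (tk : A → B) (t' : Fin n → A → B)
    (hwit : ∀ j : Fin n, θv j tk →
      θv j (t' j) ∧ restrict (Uv j) (t' j) = restrict (Uv j) tk) :
    ∀ j : Fin n,
      psView (Uv j) (θv j) {s | ∃ j' : Fin n, θv j' tk ∧ s = t' j'} =
      psView (Uv j) (θv j) ({s | ∃ j' : Fin n, θv j' tk ∧ s = t' j'} ∪ {tk}) := by
  intro j
  refine (psView_union_singleton fun hθ => ?_).symm
  obtain ⟨hθ', hU⟩ := hwit j hθ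
  exact ⟨t' j, ⟨j, hθ, rfl⟩, hθ', hU⟩
end

section
/- Special case m = 1: let the views be V_j = π_{U_j} σ_{θ_j} R for 1 ≤ j ≤ n and the query Q = π_U σ_θ R over a single relation R. Then {V_j} determines Q if and only if for every tuple t with θ(t), there exists j with θ_j(t) such that every tuple t' with θ_j(t') and t'[U_j] = t[U_j] also satisfies θ(t') and t'[U] = t[U]. -/
/-!
If every answer tuple `t` of `Q` has a view `V_j` whose image of `t` pins down `t`'s image
under `Q`, then each answer of `Q` on `I` is recovered from a view tuple that `I'` shares, so
equal views give equal answers. Conversely, if some answer tuple `t` has no such view, let `W`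
be the set of all tuples not mapped by `Q` to `t[U]`: adding `t` to `W` leaves every view
unchanged (each `V_j`-image of `t` is already produced by a witness in `W`) but adds `t[U]` to
the answer of `Q`.
-/

open scoped Classical

section Views

variable {A B ι : Type*}

theorem restrict_mem_psView {U : Set A} {θ : (A → B) → Prop} {S : Set (A → B)} {t : A → B}
    (ht : t ∈ S) (hθ : θ t) : restrict U t ∈ psView U θ S :=
  ⟨t, ht, hθ, rfl⟩

theorem psView_insert_of_exists {U : Set A} {θ : (A → B) → Prop} {S : Set (A → B)}
    {t : A → B} (h : θ t → ∃ t' ∈ S, θ t' ∧ restrict U t' = restrict U t) :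
    psView U θ (insert t S) = psView U θ S := by
  refine subset_antisymm ?_ fun r ⟨s, hs, hθs, hr⟩ => ⟨s, Or.inr hs, hθs, hr⟩
  rintro r ⟨s, rfl | hs, hθs, rfl⟩
  · obtain ⟨t', ht', hθt', heq⟩ := h hθs
    exact ⟨t', ht', hθt', heq.symm⟩
  · exact restrict_mem_psView hs hθs

theorem restrict_notMem_psView_setOf_not (U : Set A) (θ : (A → B) → Prop) (t : A → B) :
    restrict U t ∉ psView U θ {t' | ¬(θ t' ∧ restrict U t' = restrict U t)} :=
  fun ⟨_, hs, hθs, hr⟩ => hs ⟨hθs, hr.symm⟩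

theorem psView_subset_of_forall_exists_view {Uv : ι → Set A} {θv : ι → (A → B) → Prop}
    {U : Set A} {θ : (A → B) → Prop}
    (hQ : ∀ t : A → B, θ t → ∃ j, θv j t ∧
      ∀ t' : A → B, θv j t' → restrict (Uv j) t' = restrict (Uv j) t →
        θ t' ∧ restrict U t' = restrict U t)
    {I I' : Set (A → B)} (hV : ∀ j, psView (Uv j) (θv j) I ⊆ psView (Uv j) (θv j) I') :
    psView U θ I ⊆ psView U θ I' := by
  rintro r ⟨t, ht, hθt, rfl⟩
  obtain ⟨j, hj, hdet⟩ := hQ t hθt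
  obtain ⟨t', ht', hθvt', heq⟩ := hV j (restrict_mem_psView ht hj)
  obtain ⟨hθt', hUt'⟩ := hdet t' hθvt' heq.symm
  exact ⟨t', ht', hθt', hUt'.symm⟩

theorem exists_view_of_determines {Uv : ι → Set A} {θv : ι → (A → B) → Prop}
    {U : Set A} {θ : (A → B) → Prop}
    (hD : ∀ I I' : Set (A → B),
      (∀ j, psView (Uv j) (θv j) I = psView (Uv j) (θv j) I') → psView U θ I = psView U θ I')
    {t : A → B} (ht : θ t) :
    ∃ j, θv j t ∧ ∀ t' : A → B, θv j t' → restrict (Uv j) t' = restrict (Uv j) t →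
      θ t' ∧ restrict U t' = restrict U t := by
  by_contra! hcounter
  set W : Set (A → B) := {t' | ¬(θ t' ∧ restrict U t' = restrict U t)}
  have hviews : ∀ j, psView (Uv j) (θv j) (insert t W) = psView (Uv j) (θv j) W := by
    intro j
    refine psView_insert_of_exists fun hj => ?_
    obtain ⟨t', hθvt', heq, hbad⟩ := hcounter j hj
    exact ⟨t', fun h => hbad h.1 h.2, hθvt', heq⟩
  have hmem : restrict U t ∈ psView U θ (insert t W) := restrict_mem_psView (.inl rfl) ht
  rw [hD _ _ hviews] at hmem
  exact restrict_notMem_psView_setOf_not U θ t hmem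

end Views

theorem single_relation_determinacy_iff {A B : Type*} (n : ℕ)
    (Uv : Fin n → Set A) (θv : Fin n → (A → B) → Prop)
    (U : Set A) (θ : (A → B) → Prop) :
    (∀ I I' : Set (A → B),
        (∀ j : Fin n, psView (Uv j) (θv j) I = psView (Uv j) (θv j) I') →
        psView U θ I = psView U θ I') ↔
    (∀ t : A → B, θ t → ∃ j : Fin n, θv j t ∧
        ∀ t' : A → B, θv j t' → restrict (Uv j) t' = restrict (Uv j) t →
          θ t' ∧ restrict U t' = restrict U t) := by
  refine ⟨fun hD t ht => exists_view_of_determines hD ht, fun hQ I I' hV => ?_⟩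
  exact subset_antisymm (psView_subset_of_forall_exists_view hQ fun j => (hV j).subset)
    (psView_subset_of_forall_exists_view hQ fun j => (hV j).symm.subset)
end

section
/- If condition (⋆) fails for some index k, then unrestricted determinacy fails: there exist instances I, I' (in fact finite ones) with V(I) = V(I') and Q(I) ≠ Q(I'); consequently, determinacy over all instances implies (⋆) holds for every i. -/
open scoped Classical

theorem star_necessary {m : ℕ} {A B : Type*} (U : Set (Fin m × A))
    (θ : (Fin m → A → B) → Prop) (n : Fin m → ℕ) (Uv : ∀ i, Fin (n i) → Set A)
    (θv : ∀ i, Fin (n i) → (A → B) → Prop) :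
    ((∃ k : Fin m, ¬ StarCond U θ n Uv θv k) →
      ∃ I I' : Fin m → Set (A → B),
        (∀ i, (I i).Finite) ∧ (∀ i, (I' i).Finite) ∧
        (∀ i, ∀ j : Fin (n i),
          psView (Uv i j) (θv i j) (I i) = psView (Uv i j) (θv i j) (I' i)) ∧
        joinQuery U θ I ≠ joinQuery U θ I') ∧
    (Determines U θ n Uv θv → ∀ i : Fin m, StarCond U θ n Uv θv i) := by
  have main : (∃ k : Fin m, ¬ StarCond U θ n Uv θv k) →
      ∃ I I' : Fin m → Set (A → B),
        (∀ i, (I i).Finite) ∧ (∀ i, (I' i).Finite) ∧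
        (∀ i, ∀ j : Fin (n i),
          psView (Uv i j) (θv i j) (I i) = psView (Uv i j) (θv i j) (I' i)) ∧
        joinQuery U θ I ≠ joinQuery U θ I' := by
    rintro ⟨k, hk⟩
    simp only [StarCond] at hk
    push_neg at hk
    obtain ⟨ts, hθ, hall⟩ := hk
    choose w hw1 hw2 hw3 using hall
    set T : Set (A → B) := {t | ∃ j h, t = w j h} with hT
    have hTfin : T.Finite := by
      have hEq : T = Set.range (fun j : {j : Fin (n k) // θv k j (ts k)} => w j.1 j.2) := by
        ext t
        constructor
        · rintro ⟨j, h, rfl⟩; exact ⟨⟨j, h⟩, rfl⟩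
        · rintro ⟨⟨j, h⟩, rfl⟩; exact ⟨j, h, rfl⟩
      rw [hEq]; exact Set.finite_range _
    refine ⟨fun i => if i = k then insert (ts k) T else {ts i},
            fun i => if i = k then T else {ts i}, ?_, ?_, ?_, ?_⟩
    · intro i
      by_cases hik : i = k
      · simp only [hik, if_pos rfl]; exact hTfin.insert _
      · simp only [if_neg hik]; exact Set.finite_singleton _
    · intro i
      by_cases hik : i = k
      · simp only [hik, if_pos rfl]; exact hTfin
      · simp only [if_neg hik]; exact Set.finite_singleton _
    · intro i j
      by_cases hik : i = k
      · subst hik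
        simp only [if_pos rfl]
        ext r
        constructor
        · rintro ⟨t, ht, hθt, rfl⟩
          rcases ht with rfl | htT
          · exact ⟨w j hθt, ⟨j, hθt, rfl⟩, hw1 j hθt, (hw2 j hθt).symm⟩
          · exact ⟨t, htT, hθt, rfl⟩
        · rintro ⟨t, ht, hθt, rfl⟩
          exact ⟨t, Set.mem_insert_of_mem _ ht, hθt, rfl⟩
      · simp only [if_neg hik]
    · intro heq
      have h1 : restrict U (prodTup ts) ∈
          joinQuery U θ (fun i => if i = k then insert (ts k) T else {ts i}) := by
        refine ⟨ts, fun i => ?_, hθ, rfl⟩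
        by_cases hik : i = k
        · subst hik; simp
        · simp [hik]
      rw [heq] at h1
      obtain ⟨ts', hmem, hθ', hr⟩ := h1
      have hkT : ts' k ∈ T := by
        have := hmem k; simpa using this
      obtain ⟨j, h, hwk⟩ := hkT
      have hts' : ts' = Function.update ts k (w j h) := by
        funext i
        by_cases hik : i = k
        · subst hik; rw [Function.update_self]; exact hwk
        · rw [Function.update_of_ne hik]
          have := hmem i
          simp only [if_neg hik, Set.mem_singleton_iff] at this
          exact this
      have hθup : θ (Function.update ts k (w j h)) := hts' ▸ hθ'
      have hne := hw3 j h hθup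
      apply hne
      rw [← hts']
      exact hr.symm
  refine ⟨main, ?_⟩
  intro hdet i
  by_contra hstar
  obtain ⟨I, I', _, _, hv, hq⟩ := main ⟨i, hstar⟩
  exact hq (hdet I I' hv)
end

section
/- In the counterexample construction with instances I and I' as defined (I'(R_k) = I(R_k) ∪ {t_k}, all else equal), the tuple t[U] belongs to Q(I') but not to Q(I), so Q(I) ≠ Q(I'). -/
open scoped Classical

section joinQuery

variable {m : ℕ} {A B : Type*} {U : Set (Fin m × A)} {θ : (Fin m → A → B) → Prop}
  {I : Fin m → Set (A → B)} {k : Fin m} {ts : Fin m → A → B}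

theorem mem_joinQuery_iff_of_eq_singleton (hI : ∀ i ≠ k, I i = {ts i})
    {r : Fin m × A → Option B} :
    r ∈ joinQuery U θ I ↔ ∃ s ∈ I k,
      θ (Function.update ts k s) ∧ r = restrict U (prodTup (Function.update ts k s)) := by
  constructor
  · rintro ⟨ss, hss, hθss, rfl⟩
    have hss_eq : ss = Function.update ts k (ss k) :=
      Function.eq_update_iff.2 ⟨rfl, fun i hi => by simpa [hI i hi] using hss i⟩
    exact ⟨ss k, hss k, hss_eq ▸ hθss, by rw [← hss_eq]⟩
  · rintro ⟨s, hs, hθs, rfl⟩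
    refine ⟨_, fun i => ?_, hθs, rfl⟩
    rcases eq_or_ne i k with rfl | hi
    · simpa using hs
    · simp [Function.update_of_ne hi, hI i hi]

end joinQuery

theorem counterexample_query_differs {m : ℕ} {A B : Type*} (U : Set (Fin m × A))
    (θ : (Fin m → A → B) → Prop) (n : Fin m → ℕ) (Uv : ∀ i, Fin (n i) → Set A)
    (θv : ∀ i, Fin (n i) → (A → B) → Prop) (k : Fin m)
    (ts : Fin m → A → B) (hθ : θ ts)
    (t' : Fin (n k) → A → B)
    (hwit : ∀ j : Fin (n k), θv k j (ts k) →
      θv k j (t' j) ∧ restrict (Uv k j) (t' j) = restrict (Uv k j) (ts k) ∧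
        ¬ (θ (Function.update ts k (t' j)) ∧
            restrict U (prodTup (Function.update ts k (t' j))) = restrict U (prodTup ts)))
    (I I' : Fin m → Set (A → B))
    (hI : ∀ i : Fin m, I i =
      if i = k then {s | ∃ j : Fin (n k), θv k j (ts k) ∧ s = t' j} else {ts i})
    (hI' : ∀ i : Fin m, I' i = if i = k then I k ∪ {ts k} else I i) :
    restrict U (prodTup ts) ∈ joinQuery U θ I' ∧
    restrict U (prodTup ts) ∉ joinQuery U θ I ∧
    joinQuery U θ I ≠ joinQuery U θ I' := by
  have hsingle : ∀ i ≠ k, I i = {ts i} := fun i hi => by rw [hI i, if_neg hi]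
  have hsingle' : ∀ i ≠ k, I' i = {ts i} := fun i hi => by rw [hI' i, if_neg hi, hsingle i hi]
  have hmem : restrict U (prodTup ts) ∈ joinQuery U θ I' :=
    (mem_joinQuery_iff_of_eq_singleton hsingle').2
      ⟨ts k, by simp [hI'], by simpa using hθ, by simp⟩
  have hnot : restrict U (prodTup ts) ∉ joinQuery U θ I := by
    rw [mem_joinQuery_iff_of_eq_singleton hsingle]
    rintro ⟨s, hs, hθs, hr⟩
    rw [hI k, if_pos rfl] at hs
    obtain ⟨j, hj, rfl⟩ := hs
    exact (hwit j hj).2.2 ⟨hθs, hr.symm⟩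
  exact ⟨hmem, hnot, fun h => hnot (h ▸ hmem)⟩
end
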